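/- Functoriality of the Balmer spectrum: Let F : Flat K → Flat L be a definable functor with left adjoint Λ satisfying the projection formula, K and L essentially small rigid tt-categories. Then there is an induced continuous map Spc(F) : Spc(K) → Spc(L) on Balmer spectra, obtained by applying the Kolmogorov quotient functor to the continuous map Spc^h(F) : Spc^h(K) → Spc^h(L), using that Spc(K) is the Kolmogorov quotient of Spc^h(K) via B ↦ y^{-1}(B). -/

import Mathlib

/-!
The spectrum `Spc(L)` is T₀, and `Spc(K)` carries the quotient topology of `Spc^h(K)` along
`B ↦ y⁻¹(B)`. Both `Spc^h(K)` and `Spc(K)` are topologised by the supports of the objects of `K`,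
so `y⁻¹(B) = y⁻¹(B')` forces `B` and `B'` to be inseparable. Hence the continuous composite
`Spc^h(K) → Spc^h(L) → Spc(L)` is constant on the fibres of `Spc^h(K) → Spc(K)` and descends to
a continuous map `Spc(K) → Spc(L)`.
-/

open CategoryTheory CategoryTheory.Limits CategoryTheory.MonoidalCategory
open CategoryTheory.Pretriangulated Opposite Topology

universe u

namespace TTG

variable (K : Type u) [SmallCategory K] [Preadditive K]

/-- The module category `Mod K` of additive functors `Kᵒᵖ → Ab`. -/
abbrev Mod := Kᵒᵖ ⥤ AddCommGrpCat.{u}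

/-- The (preadditive) Yoneda embedding. -/
abbrev yK : K ⥤ Mod K := preadditiveYoneda

/-- Finitely presented objects of `Mod K`: cokernels of maps of representables. -/
def IsFP (f : Mod K) : Prop :=
  ∃ (k k' : K) (g : (yK K).obj k ⟶ (yK K).obj k'), Nonempty (f ≅ cokernel g)

/-- Flat (= cohomological) objects of `Mod K`: filtered colimits of representables. -/
def IsFlat (X : Mod K) : Prop :=
  ∃ (J : Type u) (_ : SmallCategory J) (_ : IsFiltered J) (D : J ⥤ K),
    Nonempty (colimit (D ⋙ yK K) ≅ X)

/-- Pure monomorphisms in `Mod K`. -/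
def IsPureMono {A B : Mod K} (i : A ⟶ B) : Prop :=
  Mono i ∧ ∀ f : Mod K, IsFP K f → ∀ g : f ⟶ cokernel i,
    ∃ h : f ⟶ B, h ≫ cokernel.π i = g

/-- Definable subcategories of `Flat K`: classes of flat objects closed under
pure subobjects, products and direct limits. -/
structure IsDefinable (D : Set (Mod K)) : Prop where
  flat : ∀ X ∈ D, IsFlat K X
  pure_sub : ∀ {A B : Mod K} (i : A ⟶ B), IsPureMono K i → B ∈ D → A ∈ D
  prod_mem : ∀ (ι : Type u) (X : ι → Mod K), (∀ i, X i ∈ D) → (∏ᶜ X) ∈ D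
  colim_mem : ∀ (J : Type u) [SmallCategory J] [IsFiltered J] (G : J ⥤ Mod K),
      (∀ j, G.obj j ∈ D) → colimit G ∈ D

/-- The pure subobject closure of a class of objects. -/
def pureClosure (T : Set (Mod K)) : Set (Mod K) :=
  {A | ∃ B ∈ T, ∃ i : A ⟶ B, IsPureMono K i}

section Monoidal

variable [MonoidalCategory (Mod K)]

/-- `⊗`-closed classes of flat objects. -/
def TensorClosed (D : Set (Mod K)) : Prop :=
  ∀ X ∈ D, ∀ Y : Mod K, IsFlat K Y → X ⊗ Y ∈ D

/-- Serre subcategories of `mod K`. -/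
structure IsSerre (S : Set (Mod K)) : Prop where
  fp : ∀ f ∈ S, IsFP K f
  zero_mem : ∀ f : Mod K, IsZero f → f ∈ S
  sub_mem : ∀ {A B : Mod K} (i : A ⟶ B), Mono i → IsFP K A → B ∈ S → A ∈ S
  quot_mem : ∀ {A B : Mod K} (p : A ⟶ B), Epi p → IsFP K B → A ∈ S → B ∈ S
  ext_mem : ∀ (C : ShortComplex (Mod K)), C.ShortExact → IsFP K C.X₂ →
      C.X₁ ∈ S → C.X₃ ∈ S → C.X₂ ∈ S

/-- Serre ⊗-ideals of `mod K`. -/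
def IsSerreTensorIdeal (S : Set (Mod K)) : Prop :=
  IsSerre K S ∧ ∀ f ∈ S, ∀ g : Mod K, IsFP K g → f ⊗ g ∈ S

/-- Homological primes: maximal proper Serre ⊗-ideals of `mod K`. -/
def IsHomPrime (B : Set (Mod K)) : Prop :=
  IsSerreTensorIdeal K B ∧ ¬ (∀ f, IsFP K f → f ∈ B) ∧
    ∀ S, IsSerreTensorIdeal K S → B ⊆ S → ¬ (∀ f, IsFP K f → f ∈ S) → S = B

/-- The definable subcategory `D(S)` associated to a Serre subcategory `S`. -/
def Dcal (S : Set (Mod K)) : Set (Mod K) :=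
  {X | IsFlat K X ∧ ∀ f ∈ S, ∀ g : f ⟶ X, g = 0}

/-- The Serre subcategory `S(D)` associated to a definable subcategory `D`. -/
def Scal (D : Set (Mod K)) : Set (Mod K) :=
  {f | IsFP K f ∧ ∀ X ∈ D, ∀ g : f ⟶ X, g = 0}

/-- The smallest ⊗-closed definable subcategory `Def^⊗(X)` containing `X`. -/
def DefTensor (X : Mod K) : Set (Mod K) :=
  {Y | ∀ D : Set (Mod K), IsDefinable K D → TensorClosed K D → X ∈ D → Y ∈ D}

/-- Simple (= minimal nonzero) ⊗-closed definable subcategories. -/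
def IsSimple (D : Set (Mod K)) : Prop :=
  IsDefinable K D ∧ TensorClosed K D ∧ (∃ X ∈ D, ¬ IsZero X) ∧
    ∀ E ⊆ D, IsDefinable K E → TensorClosed K E → (∃ X ∈ E, ¬ IsZero X) → E = D

/-- Weak ring objects: `η : 𝟙 ⟶ R` with `R ◁ η` a split monomorphism. -/
def IsWeakRing (R : Mod K) : Prop :=
  ∃ η : 𝟙_ (Mod K) ⟶ R, IsSplitMono ((ρ_ R).inv ≫ R ◁ η)

/-- The direct limit closure of a class of objects. -/
def limClosure (S : Set (Mod K)) : Set (Mod K) :=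
  {X | ∃ (J : Type u) (_ : SmallCategory J) (_ : IsFiltered J) (G : J ⥤ Mod K),
    (∀ j, G.obj j ∈ S) ∧ Nonempty (colimit G ≅ X)}

/-- The set of homological primes (points of the homological spectrum). -/
abbrev HP := {B : Set (Mod K) // IsHomPrime K B}

/-- The topology on the homological spectrum, generated by the opens
complementary to the basic closed sets `supp^h(k)`. -/
def hspecTop : TopologicalSpace (HP K) :=
  TopologicalSpace.generateFrom {U | ∃ k : K, U = {B : HP K | (yK K).obj k ∈ B.1}}

end Monoidal

end TTG

namespace TTG

variable (K : Type u) [SmallCategory K] [Preadditive K]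
  [MonoidalCategory K] [SymmetricCategory K] [RigidCategory K]
  [HasZeroObject K] [HasShift K ℤ] [∀ n : ℤ, (shiftFunctor K n).Additive] [Pretriangulated K]
  [MonoidalCategory (Mod K)] [MonoidalPreadditive (Mod K)]
  [(yK K).Monoidal] [∀ X : Mod K, PreservesColimits (tensorLeft X)]

variable (L : Type u) [SmallCategory L] [Preadditive L]
  [MonoidalCategory L] [SymmetricCategory L] [RigidCategory L]
  [HasZeroObject L] [HasShift L ℤ] [∀ n : ℤ, (shiftFunctor L n).Additive] [Pretriangulated L]
  [MonoidalCategory (Mod L)] [MonoidalPreadditive (Mod L)]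
  [(yK L).Monoidal] [∀ X : Mod L, PreservesColimits (tensorLeft X)]

variable (F : Mod K ⥤ Mod L) (Lam : Mod L ⥤ Mod K) (adj : Lam ⊣ F)
  [PreservesFilteredColimits F] [∀ ι : Type u, PreservesLimitsOfShape (Discrete ι) F]
  (hFflat : ∀ X : Mod K, IsFlat K X → IsFlat L (F.obj X))
  (hLamflat : ∀ Y : Mod L, IsFlat L Y → IsFlat K (Lam.obj Y))
  (proj : (𝟭 (Mod K)).prod Lam ⋙ tensor (Mod K) ⋙ F ≅ F.prod (𝟭 (Mod L)) ⋙ tensor (Mod L))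

variable [F.LaxMonoidal] (Jf : HP K → Mod K)
  (hJ : ∀ B : HP K, Injective (Jf B) ∧ IsFlat K (Jf B) ∧ IsWeakRing K (Jf B) ∧
    Jf B ∈ Dcal K B.1 ∧ ∀ f : Mod K, IsFP K f → (f ∈ B.1 ↔ IsZero (f ⊗ Jf B)))
  (hW : ∀ B : HP K, IsHomPrime L {f : Mod L | IsFP L f ∧ IsZero (f ⊗ F.obj (Jf B))})

/-- Balmer primes: prime thick ⊗-ideals of the rigid tt-category `K`. -/
def IsBalmerPrime (P : Set K) : Prop :=
  (∀ a b : K, Nonempty (a ≅ b) → a ∈ P → b ∈ P) ∧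
  (∀ a : K, a ∈ P → a⟦(1 : ℤ)⟧ ∈ P ∧ a⟦(-1 : ℤ)⟧ ∈ P) ∧
  (∀ T, T ∈ (distTriang K) → T.obj₁ ∈ P → T.obj₂ ∈ P → T.obj₃ ∈ P) ∧
  (∀ a b : K, (∃ (i : a ⟶ b) (r : b ⟶ a), i ≫ r = 𝟙 a) → b ∈ P → a ∈ P) ∧
  (∀ a ∈ P, ∀ b : K, a ⊗ b ∈ P) ∧ (∃ a : K, a ∉ P) ∧
  (∀ a b : K, a ⊗ b ∈ P → a ∈ P ∨ b ∈ P)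

/-- The Balmer spectrum as a set. -/
abbrev Spc := {P : Set K // IsBalmerPrime K P}

/-- The topology on the Balmer spectrum, generated by the opens complementary to the
basic closed sets `supp(k)`. -/
def spcTop : TopologicalSpace (Spc K) :=
  TopologicalSpace.generateFrom {U | ∃ k : K, U = {P : Spc K | k ∈ P.1}}

theorem _root_.TopologicalSpace.inseparable_generateFrom_iff {X : Type*} {S : Set (Set X)}
    {x y : X} : @Inseparable X (TopologicalSpace.generateFrom S) x y ↔ ∀ s ∈ S, (x ∈ s ↔ y ∈ s) := by
  let _ := TopologicalSpace.generateFrom S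
  refine ⟨fun h s hs => inseparable_iff_forall_isOpen.1 h s
    (TopologicalSpace.isOpen_generateFrom_of_mem hs), fun h => ?_⟩
  have hS : {s | x ∈ s ∧ s ∈ S} = {s | y ∈ s ∧ s ∈ S} :=
    Set.ext fun s => and_congr_left fun hs => h s hs
  change 𝓝 x = 𝓝 y
  rw [TopologicalSpace.nhds_generateFrom, TopologicalSpace.nhds_generateFrom, hS]

theorem _root_.Topology.IsQuotientMap.exists_continuous_lift_of_inseparable {X Y Z : Type*}
    [TopologicalSpace X] [TopologicalSpace Y] [TopologicalSpace Z] [T0Space Z] {q : X → Y}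
    (hq : IsQuotientMap q) (hinsep : ∀ x x', q x = q x' → Inseparable x x') {f : X → Z}
    (hf : Continuous f) : ∃ g : Y → Z, Continuous g ∧ ∀ x, g (q x) = f x := by
  let q' : C(X, Y) := ⟨q, hq.continuous⟩
  have hfq : Function.FactorsThrough f q := fun x x' h => ((hinsep x x' h).map hf).eq
  exact ⟨_, (hq.lift (f := q') ⟨f, hf⟩ hfq).continuous,
    fun x => DFunLike.congr_fun (hq.lift_comp (f := q') ⟨f, hf⟩ hfq) x⟩

theorem balmer_spectrum_functoriality
    (hcmpK : ∀ B : HP K, IsBalmerPrime K {k : K | (yK K).obj k ∈ B.1})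
    (hcmpL : ∀ B : HP L, IsBalmerPrime L {l : L | (yK L).obj l ∈ B.1})
    (hcont : Continuous[hspecTop K, hspecTop L]
      (fun B : HP K =>
        (⟨{f : Mod L | IsFP L f ∧ IsZero (f ⊗ F.obj (Jf B))}, hW B⟩ : HP L)))
    (hquotK : @IsQuotientMap (HP K) (Spc K) (hspecTop K) (spcTop K)
      (fun B : HP K => ⟨{k : K | (yK K).obj k ∈ B.1}, hcmpK B⟩)) :
    ∃ g : Spc K → Spc L, Continuous[spcTop K, spcTop L] g ∧
      ∀ B : HP K,
        g ⟨{k : K | (yK K).obj k ∈ B.1}, hcmpK B⟩ =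
          ⟨{l : L | (yK L).obj l ∈
              {f : Mod L | IsFP L f ∧ IsZero (f ⊗ F.obj (Jf B))}},
            hcmpL ⟨{f : Mod L | IsFP L f ∧ IsZero (f ⊗ F.obj (Jf B))}, hW B⟩⟩ := by
  let _ := hspecTop K
  let _ := hspecTop L
  let _ := spcTop K
  let _ := spcTop L
  have hqL : Continuous fun B : HP L => (⟨{l : L | (yK L).obj l ∈ B.1}, hcmpL B⟩ : Spc L) :=
    continuous_generateFrom_iff.2 <| by
      rintro _ ⟨l, rfl⟩
      exact TopologicalSpace.isOpen_generateFrom_of_mem ⟨l, rfl⟩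
  have : T0Space (Spc L) := (t0Space_iff_inseparable _).2 fun P P' h =>
    Subtype.ext <| Set.ext fun l => TopologicalSpace.inseparable_generateFrom_iff.1 h _ ⟨l, rfl⟩
  have hinsep : ∀ B B' : HP K, (⟨{k : K | (yK K).obj k ∈ B.1}, hcmpK B⟩ : Spc K) =
      ⟨{k : K | (yK K).obj k ∈ B'.1}, hcmpK B'⟩ → Inseparable B B' := by
    intro B B' h
    refine TopologicalSpace.inseparable_generateFrom_iff.2 ?_
    rintro _ ⟨k, rfl⟩
    exact Set.ext_iff.1 (congrArg Subtype.val h) k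
  exact hquotK.exists_continuous_lift_of_inseparable hinsep (hqL.comp hcont)

end TTG
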